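/- Let c : E(K_n) → {−1,1} be zero-sum and let H be a Δ-regular spanning subgraph of K_n with c(E(H)) > 0. Then there exist distinct vertices u, v such that c(E(H_{uv})) < c(E(H)), where H_{uv} is the copy of H with the roles of u and v exchanged. -/

import Mathlib

/-!
Average over all ordered pairs `(u, v)`, including `u = v`, for which `H_{uu} = H`. Summing `c`
over the images of a fixed edge `ab` under the `n²` maps `swap u v` gives
`2 (starSum c a + starSum c b) + (n - 2)² c(ab)`, where `starSum c x` is the weight of the star
of `x` in `K_n`: `swap u v` fixes `ab` unless it moves `a` or `b`. Summed over the edges of the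
`Δ`-regular graph `H`, the star terms add up to `4Δ c(E(K_n)) = 0`, so the mean of
`c(E(H_{uv}))` is `((n - 2) / n)² c(E(H)) < c(E(H))`.
-/

/-- `swapGraph H u v` is the isomorphic copy `H_{uv}` of `H` in which the vertices `u` and `v`
have exchanged their roles. -/
def swapGraph {V : Type*} [DecidableEq V] (H : SimpleGraph V) (u v : V) : SimpleGraph V where
  Adj a b := H.Adj (Equiv.swap u v a) (Equiv.swap u v b)
  symm := ⟨fun a b h => H.adj_symm h⟩
  loopless := ⟨fun a h => H.ne_of_adj h rfl⟩

instance {V : Type*} [DecidableEq V] (H : SimpleGraph V) [DecidableRel H.Adj] (u v : V) :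
    DecidableRel (swapGraph H u v).Adj :=
  fun a b => inferInstanceAs (Decidable (H.Adj (Equiv.swap u v a) (Equiv.swap u v b)))

open Finset

variable {V M : Type*}

@[simp]
theorem swapGraph_adj [DecidableEq V] (H : SimpleGraph V) (u v a b : V) :
    (swapGraph H u v).Adj a b ↔ H.Adj (Equiv.swap u v a) (Equiv.swap u v b) :=
  Iff.rfl

namespace SimpleGraph

variable [Fintype V] [AddCommMonoid M] (G : SimpleGraph V) [DecidableRel G.Adj]

theorem sum_sum_neighborFinset_eq_two_nsmul [DecidableEq V] (f : Sym2 V → M) :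
    ∑ a, ∑ b ∈ G.neighborFinset a, f s(a, b) = 2 • ∑ e ∈ G.edgeFinset, f e := by
  rw [← sum_finset_product' {p : V × V | G.Adj p.1 p.2} univ (fun a => G.neighborFinset a)
      (by simp),
    ← sum_fiberwise_of_maps_to (g := fun p : V × V => s(p.1, p.2)) (t := G.edgeFinset)
      (by simp), smul_sum]
  refine sum_congr rfl fun e he => ?_
  induction e with
  | _ x y =>
    have hxy : G.Adj x y := by simpa using he
    have hfiber : ({p : V × V | G.Adj p.1 p.2} : Finset _).filter
        (fun p => s(p.1, p.2) = s(x, y)) = {(x, y), (y, x)} := by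
      ext ⟨p, q⟩
      simp only [mem_filter, mem_univ, true_and, Sym2.eq_iff, mem_insert, mem_singleton,
        Prod.mk.injEq]
      constructor
      · exact fun h => h.2
      · rintro (⟨rfl, rfl⟩ | ⟨rfl, rfl⟩)
        · exact ⟨hxy, Or.inl ⟨rfl, rfl⟩⟩
        · exact ⟨hxy.symm, Or.inr ⟨rfl, rfl⟩⟩
    rw [hfiber, sum_pair (by simp [hxy.ne]), two_nsmul, Sym2.eq_swap (a := y)]

theorem sum_sum_neighborFinset_apply_right (g : V → M) :
    ∑ a, ∑ b ∈ G.neighborFinset a, g b = ∑ a, G.degree a • g a := by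
  rw [sum_comm' (t' := univ) (s' := fun b => G.neighborFinset b) fun _ _ => by simp [adj_comm]]
  simp only [sum_const, card_neighborFinset_eq_degree]

theorem IsRegularOfDegree.sum_sum_neighborFinset_add {G : SimpleGraph V} [DecidableRel G.Adj]
    {Δ : ℕ} (hG : G.IsRegularOfDegree Δ) (g : V → M) :
    ∑ a, ∑ b ∈ G.neighborFinset a, (g a + g b) = (2 * Δ) • ∑ a, g a := by
  simp only [sum_add_distrib, G.sum_sum_neighborFinset_apply_right g, sum_const,
    card_neighborFinset_eq_degree, hG.degree_eq, ← smul_sum, ← two_nsmul, smul_smul]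

end SimpleGraph

section Swap

variable [Fintype V] [DecidableEq V] [AddCommMonoid M]

theorem sum_edgeFinset_swapGraph (H : SimpleGraph V) [DecidableRel H.Adj] (f : Sym2 V → M)
    (u v : V) :
    ∑ e ∈ (swapGraph H u v).edgeFinset, f e
      = ∑ e ∈ H.edgeFinset, f (e.map (Equiv.swap u v)) := by
  have hinv (e : Sym2 V) : (e.map (Equiv.swap u v)).map (Equiv.swap u v) = e := by
    simp [Sym2.map_map]
  refine sum_nbij' (Sym2.map (Equiv.swap u v)) (Sym2.map (Equiv.swap u v)) ?_ ?_
    (fun e _ => hinv e) (fun e _ => hinv e) (fun e _ => by rw [hinv])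
  all_goals
    intro e he
    induction e
    simpa using he

def starSum (c : Sym2 V → M) (x : V) : M := ∑ y ∈ {x}ᶜ, c s(x, y)

theorem sum_eq_add_add_sum_compl_pair {a b : V} (hab : a ≠ b) (g : V → M) :
    ∑ x, g x = g a + g b + ∑ x ∈ {a, b}ᶜ, g x := by
  rw [← sum_add_sum_compl {a, b} g, sum_pair hab]

theorem sum_compl_singleton_eq_add_sum_compl_pair {a b : V} (hab : a ≠ b) (g : V → M) :
    ∑ x ∈ {a}ᶜ, g x = g b + ∑ x ∈ {a, b}ᶜ, g x := by
  rw [show ({a}ᶜ : Finset V) = insert b {a, b}ᶜ by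
    ext x; rcases eq_or_ne x b with rfl | hxb <;> simp [hab.symm, *], sum_insert (by simp)]

theorem sum_map_swap_left (c : Sym2 V → M) {a b : V} (hab : a ≠ b) :
    ∑ v, c (s(a, b).map (Equiv.swap a v)) = c s(a, b) + starSum c b := by
  rw [Fintype.sum_eq_add_sum_compl b, starSum]
  congr 1
  · simp [Sym2.eq_swap]
  · refine sum_congr rfl fun v hv => ?_
    have hvb : v ≠ b := by simpa using hv
    rw [Sym2.map_mk, Equiv.swap_apply_left, Equiv.swap_apply_of_ne_of_ne hab.symm hvb.symm,
      Sym2.eq_swap]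

theorem sum_map_swap_of_ne (c : Sym2 V → M) {a b u : V} (hab : a ≠ b) (hua : u ≠ a)
    (hub : u ≠ b) :
    ∑ v, c (s(a, b).map (Equiv.swap u v))
      = c s(b, u) + c s(a, u) + (Fintype.card V - 2) • c s(a, b) := by
  rw [sum_eq_add_add_sum_compl_pair hab]
  congr 1
  · rw [Sym2.map_mk, Sym2.map_mk, Equiv.swap_apply_right, Equiv.swap_apply_right,
      Equiv.swap_apply_of_ne_of_ne hub.symm hab.symm, Equiv.swap_apply_of_ne_of_ne hua.symm hab,
      Sym2.eq_swap (a := u)]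
  · rw [← card_pair hab, ← card_compl, ← sum_const]
    refine sum_congr rfl fun v hv => ?_
    obtain ⟨hva, hvb⟩ : v ≠ a ∧ v ≠ b := by simpa using hv
    rw [Sym2.map_mk, Equiv.swap_apply_of_ne_of_ne hua.symm hva.symm,
      Equiv.swap_apply_of_ne_of_ne hub.symm hvb.symm]

theorem sum_sum_map_swap (c : Sym2 V → M) {a b : V} (hab : a ≠ b) :
    ∑ u, ∑ v, c (s(a, b).map (Equiv.swap u v))
      = 2 • (starSum c a + starSum c b) + (Fintype.card V - 2) ^ 2 • c s(a, b) := by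
  have hb : ∑ v, c (s(a, b).map (Equiv.swap b v)) = c s(a, b) + starSum c a := by
    rw [Sym2.eq_swap]
    exact sum_map_swap_left c hab.symm
  have hrest : ∑ u ∈ {a, b}ᶜ, ∑ v, c (s(a, b).map (Equiv.swap u v))
      = ∑ u ∈ {a, b}ᶜ, c s(b, u) + ∑ u ∈ {a, b}ᶜ, c s(a, u)
        + (Fintype.card V - 2) ^ 2 • c s(a, b) := by
    rw [sum_congr rfl fun u hu => sum_map_swap_of_ne c hab (by simp_all) (by simp_all),
      sum_add_distrib, sum_add_distrib, sum_const, card_compl, card_pair hab, smul_smul, sq]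
  rw [sum_eq_add_add_sum_compl_pair hab, sum_map_swap_left c hab, hb, hrest, starSum, starSum,
    sum_compl_singleton_eq_add_sum_compl_pair hab,
    sum_compl_singleton_eq_add_sum_compl_pair hab.symm, pair_comm b a, Sym2.eq_swap (a := b)]
  abel

theorem sum_starSum (c : Sym2 V → M) :
    ∑ x, starSum c x = 2 • ∑ e ∈ (⊤ : SimpleGraph V).edgeFinset, c e := by
  simp only [starSum, ← SimpleGraph.neighborFinset_top]
  exact SimpleGraph.sum_sum_neighborFinset_eq_two_nsmul ⊤ c

theorem sum_sum_sum_edgeFinset_swapGraph [IsAddTorsionFree M] {H : SimpleGraph V}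
    [DecidableRel H.Adj] {Δ : ℕ} (hH : H.IsRegularOfDegree Δ) (c : Sym2 V → M) :
    ∑ u, ∑ v, ∑ e ∈ (swapGraph H u v).edgeFinset, c e
      = (4 * Δ) • ∑ e ∈ (⊤ : SimpleGraph V).edgeFinset, c e
        + (Fintype.card V - 2) ^ 2 • ∑ e ∈ H.edgeFinset, c e := by
  apply nsmul_right_injective two_ne_zero
  simp only [sum_edgeFinset_swapGraph]
  calc 2 • ∑ u, ∑ v, ∑ e ∈ H.edgeFinset, c (e.map (Equiv.swap u v))
      = 2 • ∑ e ∈ H.edgeFinset, ∑ u, ∑ v, c (e.map (Equiv.swap u v)) := by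
        rw [sum_congr rfl fun _ _ => sum_comm, sum_comm]
    _ = ∑ a, ∑ b ∈ H.neighborFinset a, ∑ u, ∑ v, c (s(a, b).map (Equiv.swap u v)) :=
        (H.sum_sum_neighborFinset_eq_two_nsmul _).symm
    _ = ∑ a, ∑ b ∈ H.neighborFinset a,
          (2 • (starSum c a + starSum c b) + (Fintype.card V - 2) ^ 2 • c s(a, b)) :=
        sum_congr rfl fun a _ => sum_congr rfl fun b hb =>
          sum_sum_map_swap c (H.ne_of_adj (by simpa using hb))
    _ = 2 • ∑ a, ∑ b ∈ H.neighborFinset a, (starSum c a + starSum c b)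
          + (Fintype.card V - 2) ^ 2 • ∑ a, ∑ b ∈ H.neighborFinset a, c s(a, b) := by
        rw [sum_congr rfl fun _ _ => sum_add_distrib, sum_add_distrib]
        simp only [smul_sum]
    _ = _ := by
        rw [hH.sum_sum_neighborFinset_add, H.sum_sum_neighborFinset_eq_two_nsmul, sum_starSum,
          smul_add, smul_comm 2 ((Fintype.card V - 2) ^ 2)]
        simp only [smul_smul]
        ring_nf

end Swap

theorem exists_improving_swap_general (n Δ : ℕ) (c : Sym2 (Fin n) → ℝ)
    (hzero : ∑ e ∈ (⊤ : SimpleGraph (Fin n)).edgeFinset, c e = 0)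
    (H : SimpleGraph (Fin n)) [DecidableRel H.Adj] (hreg : H.IsRegularOfDegree Δ)
    (hpos : 0 < ∑ e ∈ H.edgeFinset, c e) :
    ∃ u v : Fin n, u ≠ v ∧
      ∑ e ∈ (swapGraph H u v).edgeFinset, c e < ∑ e ∈ H.edgeFinset, c e := by
  have hn : 0 < n := by
    obtain ⟨e, -⟩ := nonempty_of_sum_ne_zero hpos.ne'
    exact Sym2.ind (fun x _ => x.pos) e
  have hsum : ∑ u, ∑ v, ∑ e ∈ (swapGraph H u v).edgeFinset, c e
      < ∑ _u : Fin n, ∑ _v : Fin n, ∑ e ∈ H.edgeFinset, c e := by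
    rw [sum_sum_sum_edgeFinset_swapGraph hreg, hzero, smul_zero, zero_add]
    simp only [sum_const, card_univ, Fintype.card_fin, smul_smul, ← sq]
    exact nsmul_lt_nsmul_left hpos (Nat.pow_lt_pow_left (by omega) two_ne_zero)
  obtain ⟨u, -, hu⟩ := exists_lt_of_sum_lt hsum
  obtain ⟨v, -, huv⟩ := exists_lt_of_sum_lt hu
  refine ⟨u, v, ?_, huv⟩
  rintro rfl
  simp [sum_edgeFinset_swapGraph] at huv

/-- If `c` is a zero-sum `±1`-labeling of `K_n` and `H` is a `Δ`-regular spanning subgraph of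
`K_n` with `c(E(H)) > 0`, then there are distinct vertices `u, v` with
`c(E(H_{uv})) < c(E(H))`. -/
theorem exists_improving_swap (n Δ : ℕ) (c : Sym2 (Fin n) → ℝ)
    (hc : ∀ e ∈ (⊤ : SimpleGraph (Fin n)).edgeFinset, c e = 1 ∨ c e = -1)
    (hzero : ∑ e ∈ (⊤ : SimpleGraph (Fin n)).edgeFinset, c e = 0)
    (H : SimpleGraph (Fin n)) [DecidableRel H.Adj] (hreg : H.IsRegularOfDegree Δ)
    (hpos : 0 < ∑ e ∈ H.edgeFinset, c e) :
    ∃ u v : Fin n, u ≠ v ∧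
      ∑ e ∈ (swapGraph H u v).edgeFinset, c e < ∑ e ∈ H.edgeFinset, c e :=
  exists_improving_swap_general n Δ c hzero H hreg hpos
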